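/- Under the hypotheses of the abstract fixed point lemma (Banach space X, linear T with ‖T‖ ≤ τ < 1, bilinear B with bound K, 0 < ε < (1-τ)²/(4K)), if x and x̃ are solutions of x = y + B(x,x) + T(x) and x̃ = ỹ + B(x̃,x̃) + T(x̃) with ‖y‖, ‖ỹ‖ ≤ ε and ‖x‖, ‖x̃‖ ≤ 2ε/(1-τ), then ‖x - x̃‖ ≤ (1-τ)/((1-τ)² - 4Kε) · ‖y - ỹ‖. -/
import Mathlib


/-- Continuous dependence on the data in the abstract fixed point lemma. -/
theorem stmt1 {X : Type*} [NormedAddCommGroup X] [NormedSpace ℝ X] [CompleteSpace X]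
    (T : X →L[ℝ] X) (τ : ℝ) (hτ : ‖T‖ ≤ τ) (hτ1 : τ < 1)
    (B : X → X → X)
    (hB1 : ∀ x, IsLinearMap ℝ (B x)) (hB2 : ∀ y, IsLinearMap ℝ (fun x => B x y))
    (K : ℝ) (hK : 0 < K) (hB : ∀ x₁ x₂, ‖B x₁ x₂‖ ≤ K * ‖x₁‖ * ‖x₂‖)
    (ε : ℝ) (hε : 0 < ε) (hεK : ε < (1 - τ) ^ 2 / (4 * K))
    (y y' x x' : X)
    (hy : ‖y‖ ≤ ε) (hy' : ‖y'‖ ≤ ε)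
    (hx : x = y + B x x + T x) (hx' : x' = y' + B x' x' + T x')
    (hxn : ‖x‖ ≤ 2 * ε / (1 - τ)) (hx'n : ‖x'‖ ≤ 2 * ε / (1 - τ)) :
    ‖x - x'‖ ≤ (1 - τ) / ((1 - τ) ^ 2 - 4 * K * ε) * ‖y - y'‖ := by
  have h1 : (0:ℝ) < 1 - τ := by linarith
  have hden : (0:ℝ) < (1 - τ) ^ 2 - 4 * K * ε := by
    have h4 : ε * (4 * K) < (1 - τ) ^ 2 := (lt_div_iff₀ (by positivity)).mp hεK
    nlinarith
  -- key identity
  have hid : x - x' = (y - y') + (B x (x - x') + B (x - x') x') + T (x - x') := by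
    have e1 : B x (x - x') = B x x - B x x' := (hB1 x).map_sub x x'
    have e2 : B (x - x') x' = B x x' - B x' x' := (hB2 x').map_sub x x'
    rw [e1, e2, map_sub]
    nth_rewrite 1 [hx]
    nth_rewrite 1 [hx']
    abel
  have hT : ‖T (x - x')‖ ≤ τ * ‖x - x'‖ :=
    le_trans (T.le_opNorm _) (by
      have := norm_nonneg (x - x'); nlinarith [norm_nonneg T])
  have hest : ‖x - x'‖ ≤ ‖y - y'‖ + (K * ‖x‖ * ‖x - x'‖ + K * ‖x - x'‖ * ‖x'‖)
      + τ * ‖x - x'‖ := by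
    calc ‖x - x'‖ = ‖(y - y') + (B x (x - x') + B (x - x') x') + T (x - x')‖ := by rw [← hid]
    _ ≤ ‖y - y'‖ + ‖B x (x - x') + B (x - x') x'‖ + ‖T (x - x')‖ := by
        exact le_trans (norm_add_le _ _) (by
          have := norm_add_le (y - y') (B x (x - x') + B (x - x') x'); linarith)
    _ ≤ ‖y - y'‖ + (K * ‖x‖ * ‖x - x'‖ + K * ‖x - x'‖ * ‖x'‖) + τ * ‖x - x'‖ := by
        have h3 := norm_add_le (B x (x - x')) (B (x - x') x')
        have h4 := hB x (x - x')
        have h5 := hB (x - x') x'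
        linarith
  have hd : (0:ℝ) ≤ ‖x - x'‖ := norm_nonneg _
  have hn : (0:ℝ) ≤ ‖y - y'‖ := norm_nonneg _
  rw [div_mul_eq_mul_div, le_div_iff₀ hden]
  set d := ‖x - x'‖
  set n := ‖y - y'‖
  set a := ‖x‖
  set b := ‖x'‖
  have ha : a * (1 - τ) ≤ 2 * ε := (le_div_iff₀ h1).mp hxn
  have hb : b * (1 - τ) ≤ 2 * ε := (le_div_iff₀ h1).mp hx'n
  have h2 : d * (1 - τ) ≤ n + K * d * (a + b) := by nlinarith [hest]
  have h3 : d * (1 - τ) * (1 - τ) ≤ (n + K * d * (a + b)) * (1 - τ) :=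
    mul_le_mul_of_nonneg_right h2 h1.le
  have h4 : K * d * (a * (1 - τ) + b * (1 - τ)) ≤ K * d * (4 * ε) :=
    mul_le_mul_of_nonneg_left (by linarith) (by positivity)
  nlinarith [h3, h4]
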